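/- Let G be a finite simple graph that is strongly regular with parameters (n, d, λ, μ), let Ḡ be its complement, and set t := √((μ−λ)² + 4(d−μ)). Then θ'(G) = θ(G) = n(t+μ−λ)/(2d+t+μ−λ) and θ'(Ḡ) = θ(Ḡ) = 1 + 2d/(t+μ−λ); in particular, θ'(G) · θ'(Ḡ) = n and θ(G) · θ(Ḡ) = n. -/

import Mathlib

open scoped Classical

noncomputable def lovaszTheta {V : Type*} [Fintype V] (G : SimpleGraph V) : ℝ :=
  sSup { x : ℝ | ∃ B : Matrix V V ℝ, B.PosSemidef ∧ B.trace = 1 ∧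
    (∀ i j, G.Adj i j → B i j = 0) ∧ x = ∑ i, ∑ j, B i j }

noncomputable def schrijverTheta {V : Type*} [Fintype V] (G : SimpleGraph V) : ℝ :=
  sSup { x : ℝ | ∃ B : Matrix V V ℝ, B.PosSemidef ∧ B.trace = 1 ∧
    (∀ i j, G.Adj i j → B i j = 0) ∧ (∀ i j, 0 ≤ B i j) ∧ x = ∑ i, ∑ j, B i j }

noncomputable def nbhd {V : Type*} [Fintype V] (G : SimpleGraph V) (v : V) : Finset V :=
  Finset.univ.filter fun w => G.Adj v w

/-- `G` is strongly regular with parameters `(n, d, l, m)`: it has `n` vertices, is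
`d`-regular, adjacent vertices have `l` common neighbors, distinct nonadjacent vertices
have `m` common neighbors, and `G` is neither complete nor empty. -/
def IsSRG {V : Type*} [Fintype V] (G : SimpleGraph V) (n d l m : ℕ) : Prop :=
  Fintype.card V = n ∧
  (∀ v, (nbhd G v).card = d) ∧
  (∀ v w, G.Adj v w → (nbhd G v ∩ nbhd G w).card = l) ∧
  (∀ v w, v ≠ w → ¬ G.Adj v w → (nbhd G v ∩ nbhd G w).card = m) ∧
  G ≠ ⊤ ∧ G ≠ ⊥

/-!
Let `A` be the adjacency matrix, `J` the all-ones matrix and `r > s` the roots of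
`x² - (λ - μ) x - (d - μ)`. Strong regularity says `A J = d J` and `(A - r)(A - s) = μ J`, so
`I`, `A`, `J` span a commutative algebra with the three spectral idempotents `J / n`,
`(A - s)(I - J / n) / (r - s)` and `(r - A)(I - J / n) / (r - s)`: the matrix `a I + b A + c J` is
positive semidefinite as soon as `a + b d + c n`, `a + b r` and `a + b s` are nonnegative.

This gives a primal certificate `W = ((1 - c) I - c A + c J) / n` with `c = 1 / (1 + r)`, which is
entrywise nonnegative, and a dual certificate `Y = κ I - J + (n / (d - s)) A`, both of value
`κ = -n s / (d - s)`. Weak duality holds because the Schur product `B ⊙ Y` of a feasible `B` with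
`Y` is positive semidefinite, and its entry sum is `κ - ∑ B`. Hence `θ'(G) = θ(G) = κ`. The
complement satisfies the same relation with the roots `-1 - s > -1 - r`, whence
`θ'(Ḡ) = θ(Ḡ) = 1 - d / s`.
-/

open Matrix

section

variable {V : Type*}

namespace Matrix

theorem isHermitian_of_one : (of 1 : Matrix V V ℝ).IsHermitian := by
  ext i j
  simp

variable [Fintype V]

theorem PosSemidef.of_mul_self_eq_smul {M : Matrix V V ℝ} {c : ℝ} (hM : M.IsHermitian)
    (hc : 0 < c) (hMM : M * M = c • M) : M.PosSemidef := by
  have hM' : M = c⁻¹ • (Mᴴ * M) := by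
    rw [hM.eq, hMM, smul_smul, inv_mul_cancel₀ hc.ne', one_smul]
  rw [hM']
  exact (posSemidef_conjTranspose_mul_self M).smul (inv_nonneg.mpr hc.le)

theorem PosSemidef.sum_sum_nonneg {M : Matrix V V ℝ} (hM : M.PosSemidef) :
    0 ≤ ∑ i, ∑ j, M i j := by
  simpa [dotProduct, mulVec] using hM.dotProduct_mulVec_nonneg 1

theorem of_one_mul_of_one : (of 1 : Matrix V V ℝ) * of 1 = (Fintype.card V : ℝ) • of 1 := by
  ext i j
  simp [mul_apply]

section RegularAlgebra

variable {A : Matrix V V ℝ} {d r s μ : ℝ}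

theorem sub_smul_one_mul_of_one (hAJ : A * of 1 = d • of 1) (x : ℝ) :
    (A - x • 1) * of 1 = (d - x) • of 1 := by
  rw [sub_mul, hAJ, smul_mul_assoc, Matrix.one_mul, sub_smul]

theorem of_one_mul_sub_smul_one (hA : A.IsHermitian) (hAJ : A * of 1 = d • of 1) (x : ℝ) :
    of 1 * (A - x • 1) = (d - x) • of 1 := by
  have hJA := congrArg conjTranspose hAJ
  rw [conjTranspose_mul, conjTranspose_smul, hA.eq, isHermitian_of_one.eq, star_trivial] at hJA
  rw [mul_sub, hJA, mul_smul_comm, Matrix.mul_one, sub_smul]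

theorem sub_smul_one_mul_sub_smul_one_comm (A : Matrix V V ℝ) (x y : ℝ) :
    (A - x • 1) * (A - y • 1) = (A - y • 1) * (A - x • 1) := by
  simp only [sub_mul, mul_sub, smul_mul_assoc, mul_smul_comm, Matrix.one_mul, Matrix.mul_one]
  module

theorem card_mul_eq_of_sub_smul_one_mul [Nonempty V] (hAJ : A * of 1 = d • of 1)
    (hrel : (A - r • 1) * (A - s • 1) = μ • of 1) :
    Fintype.card V * μ = (d - r) * (d - s) := by
  have hJ : (A - r • 1) * (A - s • 1) * of 1 = μ • (of 1 * of 1) := by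
    rw [hrel, smul_mul_assoc]
  rw [Matrix.mul_assoc, sub_smul_one_mul_of_one hAJ, Matrix.mul_smul,
    sub_smul_one_mul_of_one hAJ, of_one_mul_of_one, smul_smul, smul_smul] at hJ
  obtain ⟨i⟩ := ‹Nonempty V›
  simpa [mul_comm] using (congrFun (congrFun hJ i) i).symm

-- `(A - x) (1 - J / n)` for `A` with row sums `d`: the component of `A - x` orthogonal to the
-- all-ones vector.
noncomputable def perpOnesPart (A : Matrix V V ℝ) (d x : ℝ) : Matrix V V ℝ :=
  A - x • 1 - ((d - x) / Fintype.card V) • of 1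

theorem isHermitian_perpOnesPart (hA : A.IsHermitian) (x : ℝ) :
    (perpOnesPart A d x).IsHermitian :=
  (hA.sub (isHermitian_one.smul (.all x))).sub (isHermitian_of_one.smul (.all _))

theorem perpOnesPart_mul_self [Nonempty V] {x y : ℝ} (hA : A.IsHermitian)
    (hAJ : A * of 1 = d • of 1) (hrel : (A - x • 1) * (A - y • 1) = μ • of 1) :
    perpOnesPart A d y * perpOnesPart A d y = (x - y) • perpOnesPart A d y := by
  have hn : (Fintype.card V : ℝ) ≠ 0 := Nat.cast_ne_zero.mpr Fintype.card_ne_zero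
  have hnμ := card_mul_eq_of_sub_smul_one_mul hAJ hrel
  have hXJ := sub_smul_one_mul_of_one hAJ y
  have hJX := of_one_mul_sub_smul_one hA hAJ y
  have hXX : (A - y • 1) * (A - y • 1) = μ • of 1 + (x - y) • (A - y • 1) := by
    calc (A - y • 1) * (A - y • 1) = ((A - x • 1) + (x - y) • 1) * (A - y • 1) := by
          congr 1; module
      _ = μ • of 1 + (x - y) • (A - y • 1) := by
          rw [add_mul, hrel, smul_mul_assoc, Matrix.one_mul]
  change (A - y • 1 - _) * (A - y • 1 - _) = _ • (A - y • 1 - _)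
  generalize A - y • 1 = X at hXX hXJ hJX ⊢
  simp only [sub_mul, mul_sub, hXX, smul_mul_assoc, mul_smul_comm, hXJ, hJX, of_one_mul_of_one,
    smul_smul]
  match_scalars <;> field_simp
  linear_combination hnμ

theorem posSemidef_smul_one_add_smul_add_smul_of_one [Nonempty V] (hA : A.IsHermitian)
    (hAJ : A * of 1 = d • of 1) (hrel : (A - r • 1) * (A - s • 1) = μ • of 1) (hsr : s < r)
    {a b c : ℝ} (hd : 0 ≤ a + b * d + c * Fintype.card V) (hr : 0 ≤ a + b * r)
    (hs : 0 ≤ a + b * s) :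
    (a • 1 + b • A + c • of 1).PosSemidef := by
  have hn : (0 : ℝ) < Fintype.card V := Nat.cast_pos.mpr Fintype.card_pos
  have hrs : 0 < r - s := sub_pos.mpr hsr
  have hrel' : (A - s • 1) * (A - r • 1) = μ • of 1 := by
    rwa [sub_smul_one_mul_sub_smul_one_comm]
  have hJ : (of 1 : Matrix V V ℝ).PosSemidef :=
    .of_mul_self_eq_smul isHermitian_of_one hn of_one_mul_of_one
  have hE : (perpOnesPart A d s).PosSemidef :=
    .of_mul_self_eq_smul (isHermitian_perpOnesPart hA s) hrs (perpOnesPart_mul_self hA hAJ hrel)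
  have hF : (-perpOnesPart A d r).PosSemidef := by
    refine .of_mul_self_eq_smul (isHermitian_perpOnesPart hA r).neg hrs ?_
    rw [neg_mul_neg, perpOnesPart_mul_self hA hAJ hrel', smul_neg, ← neg_smul, neg_sub]
  -- the spectral decomposition over the eigenvalues `d`, `r`, `s`
  have hdecomp : a • 1 + b • A + c • of 1 =
      ((a + b * d + c * Fintype.card V) / Fintype.card V) • of 1 +
      ((a + b * r) / (r - s)) • perpOnesPart A d s +
      ((a + b * s) / (r - s)) • -perpOnesPart A d r := by
    unfold perpOnesPart
    match_scalars <;> field_simp <;> ring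
  rw [hdecomp]
  exact ((hJ.smul (div_nonneg hd hn.le)).add (hE.smul (div_nonneg hr hrs.le))).add
    (hF.smul (div_nonneg hs hrs.le))

end RegularAlgebra

end Matrix

section Duality

variable [Fintype V] {G : SimpleGraph V}

theorem sum_sum_le_of_posSemidef_dual {B Z : Matrix V V ℝ} {κ : ℝ}
    (hB : B.PosSemidef) (hBtr : B.trace = 1) (hBG : ∀ i j, G.Adj i j → B i j = 0)
    (hY : (κ • 1 - of 1 + Z).PosSemidef) (hZG : ∀ i j, ¬ G.Adj i j → Z i j = 0) :
    ∑ i, ∑ j, B i j ≤ κ := by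
  have hBY : ∀ i j, (B ⊙ (κ • 1 - of 1 + Z)) i j = (if i = j then κ * B i j else 0) - B i j := by
    intro i j
    have hBZ : B i j * Z i j = 0 := by
      by_cases hij : G.Adj i j
      · rw [hBG i j hij, zero_mul]
      · rw [hZG i j hij, mul_zero]
    rcases eq_or_ne i j with rfl | hij
    · simp [mul_add, mul_sub, hBZ, mul_comm]
    · simp [hij, mul_add, hBZ]
  have hsum := (hB.hadamard hY).sum_sum_nonneg
  simp only [hBY, Finset.sum_sub_distrib, Finset.sum_ite_eq, Finset.mem_univ, if_true] at hsum
  have htr : ∑ i, B i i = 1 := hBtr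
  rw [← Finset.mul_sum, htr, mul_one] at hsum
  linarith

theorem theta_eq_of_certificates {W Z : Matrix V V ℝ} {κ : ℝ}
    (hW : W.PosSemidef) (hWtr : W.trace = 1) (hWG : ∀ i j, G.Adj i j → W i j = 0)
    (hW0 : ∀ i j, 0 ≤ W i j) (hWsum : ∑ i, ∑ j, W i j = κ)
    (hY : (κ • 1 - of 1 + Z).PosSemidef) (hZG : ∀ i j, ¬ G.Adj i j → Z i j = 0) :
    schrijverTheta G = κ ∧ lovaszTheta G = κ := by
  constructor
  · refine IsGreatest.csSup_eq ⟨⟨W, hW, hWtr, hWG, hW0, hWsum.symm⟩, ?_⟩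
    rintro x ⟨B, hB, hBtr, hBG, -, rfl⟩
    exact sum_sum_le_of_posSemidef_dual hB hBtr hBG hY hZG
  · refine IsGreatest.csSup_eq ⟨⟨W, hW, hWtr, hWG, hWsum.symm⟩, ?_⟩
    rintro x ⟨B, hB, hBtr, hBG, rfl⟩
    exact sum_sum_le_of_posSemidef_dual hB hBtr hBG hY hZG

end Duality

namespace SimpleGraph

section

variable (G : SimpleGraph V) [DecidableRel G.Adj]

theorem adjMatrix_compl_eq : Gᶜ.adjMatrix ℝ = of 1 - 1 - G.adjMatrix ℝ := by
  rw [← compl_adjMatrix_eq_adjMatrix_compl ℝ G,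
    ← one_add_adjMatrix_add_compl_adjMatrix_eq_of_one ℝ G]
  abel

-- For a strongly regular graph the matrices `a I + b A + c J` form its Bose–Mesner algebra.
noncomputable def boseMesner (a b c : ℝ) : Matrix V V ℝ :=
  a • 1 + b • G.adjMatrix ℝ + c • of 1

variable {G}

theorem smul_one_sub_of_one_add_smul_adjMatrix (κ z : ℝ) :
    κ • 1 - of 1 + z • G.adjMatrix ℝ = G.boseMesner κ z (-1) := by
  unfold boseMesner
  module

theorem boseMesner_apply (a b c : ℝ) (i j : V) :
    G.boseMesner a b c i j = (if i = j then a else 0) + (if G.Adj i j then b else 0) + c := by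
  simp [boseMesner, one_apply, adjMatrix_apply]

end

variable [Fintype V] {G : SimpleGraph V} [DecidableRel G.Adj] {d : ℕ} {r s μ : ℝ}

theorem trace_boseMesner (a b c : ℝ) :
    (G.boseMesner a b c).trace = Fintype.card V * (a + c) := by
  simp [trace, boseMesner_apply, mul_add]

theorem IsRegularOfDegree.adjMatrix_mul_of_one (hG : G.IsRegularOfDegree d) :
    G.adjMatrix ℝ * of 1 = (d : ℝ) • of 1 := by
  ext i j
  simp [adjMatrix_mul_apply, hG.degree_eq i]

theorem IsRegularOfDegree.succ_le_card [Nonempty V] (hG : G.IsRegularOfDegree d) :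
    d + 1 ≤ Fintype.card V := by
  obtain ⟨i⟩ := ‹Nonempty V›
  exact hG.degree_eq i ▸ G.degree_lt_card_verts i

theorem IsRegularOfDegree.sum_sum_boseMesner (hG : G.IsRegularOfDegree d) (a b c : ℝ) :
    ∑ i, ∑ j, G.boseMesner a b c i j = Fintype.card V * (a + b * d + c * Fintype.card V) := by
  simp only [boseMesner_apply, Finset.sum_add_distrib, Finset.sum_ite_eq, Finset.mem_univ,
    if_true, ← Finset.sum_filter, ← neighborFinset_eq_filter, Finset.sum_const,
    card_neighborFinset_eq_degree, hG.degree_eq, nsmul_eq_mul, Finset.card_univ]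
  ring

theorem IsRegularOfDegree.eq_add_mul_of_adjMatrix_sub_smul_one_mul [Nonempty V]
    (hG : G.IsRegularOfDegree d)
    (hrel : (G.adjMatrix ℝ - r • 1) * (G.adjMatrix ℝ - s • 1) = μ • of 1) :
    μ = d + r * s := by
  obtain ⟨i⟩ := ‹Nonempty V›
  have hii := congrFun (congrFun hrel i) i
  simp only [sub_mul, mul_sub, smul_mul_assoc, mul_smul_comm, Matrix.one_mul,
    Matrix.mul_one] at hii
  simp only [Matrix.sub_apply, Matrix.smul_apply, adjMatrix_mul_self_apply_self, hG.degree_eq i,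
    adjMatrix_apply, G.irrefl, if_false, one_apply_eq, of_apply, Pi.one_apply, smul_eq_mul] at hii
  linarith

theorem IsRegularOfDegree.card_mul_add_mul_eq [Nonempty V] (hG : G.IsRegularOfDegree d)
    (hrel : (G.adjMatrix ℝ - r • 1) * (G.adjMatrix ℝ - s • 1) = μ • of 1) :
    Fintype.card V * (d + r * s) = (d - r) * (d - s) := by
  rw [← hG.eq_add_mul_of_adjMatrix_sub_smul_one_mul hrel]
  exact card_mul_eq_of_sub_smul_one_mul hG.adjMatrix_mul_of_one hrel

theorem IsRegularOfDegree.adjMatrix_compl_sub_smul_one_mul (hG : G.IsRegularOfDegree d)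
    (hrel : (G.adjMatrix ℝ - r • 1) * (G.adjMatrix ℝ - s • 1) = μ • of 1) :
    (Gᶜ.adjMatrix ℝ - (-1 - s) • 1) * (Gᶜ.adjMatrix ℝ - (-1 - r) • 1) =
      (Fintype.card V - 2 * d + r + s + μ) • of 1 := by
  have hAJ := hG.adjMatrix_mul_of_one
  have hcompl : ∀ x : ℝ, Gᶜ.adjMatrix ℝ - (-1 - x) • 1 = of 1 - (G.adjMatrix ℝ - x • 1) := by
    intro x
    rw [adjMatrix_compl_eq]
    module
  have hXJ := sub_smul_one_mul_of_one hAJ s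
  have hJY := of_one_mul_sub_smul_one (G.isHermitian_adjMatrix ℝ) hAJ r
  rw [sub_smul_one_mul_sub_smul_one_comm] at hrel
  rw [hcompl, hcompl]
  generalize G.adjMatrix ℝ - s • 1 = X at hrel hXJ ⊢
  generalize G.adjMatrix ℝ - r • 1 = Y at hrel hJY ⊢
  rw [sub_mul, mul_sub, mul_sub, of_one_mul_of_one, hJY, hXJ, hrel]
  module

theorem IsRegularOfDegree.posSemidef_boseMesner [Nonempty V] (hG : G.IsRegularOfDegree d)
    (hrel : (G.adjMatrix ℝ - r • 1) * (G.adjMatrix ℝ - s • 1) = μ • of 1) (hsr : s < r)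
    {a b c : ℝ} (hd : 0 ≤ a + b * d + c * Fintype.card V) (hr : 0 ≤ a + b * r)
    (hs : 0 ≤ a + b * s) :
    (G.boseMesner a b c).PosSemidef :=
  posSemidef_smul_one_add_smul_add_smul_of_one (G.isHermitian_adjMatrix ℝ)
    hG.adjMatrix_mul_of_one hrel hsr hd hr hs

theorem IsRegularOfDegree.theta_eq [Nonempty V] (hG : G.IsRegularOfDegree d)
    (hrel : (G.adjMatrix ℝ - r • 1) * (G.adjMatrix ℝ - s • 1) = μ • of 1)
    (hsr : s < r) (hr : -1 < r) (hs : s < 0) :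
    schrijverTheta G = -(Fintype.card V * s) / (d - s) ∧
      lovaszTheta G = -(Fintype.card V * s) / (d - s) := by
  have hdn : (d : ℝ) + 1 ≤ Fintype.card V := by exact_mod_cast hG.succ_le_card
  set n : ℝ := (Fintype.card V : ℝ)
  have hn : 0 < n := Nat.cast_pos.mpr Fintype.card_pos
  have hds : 0 < d - s := by linarith [(Nat.cast_nonneg d : (0 : ℝ) ≤ d)]
  have hkey := hG.card_mul_add_mul_eq hrel
  -- `c` makes the eigenvalue of `W` at `r` vanish
  set c := (1 + r)⁻¹
  have hc : 0 < c := inv_pos.mpr (by linarith)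
  have hcr : c * (1 + r) = 1 := inv_mul_cancel₀ (by linarith)
  refine theta_eq_of_certificates (W := n⁻¹ • G.boseMesner (1 - c) (-c) c)
    (Z := (n / (d - s)) • G.adjMatrix ℝ) ?_ ?_ ?_ ?_ ?_ ?_ ?_
  · refine (hG.posSemidef_boseMesner hrel hsr ?_ ?_ ?_).smul (inv_nonneg.mpr hn.le)
    · nlinarith
    · linear_combination hcr
    · nlinarith
  · rw [trace_smul, trace_boseMesner, smul_eq_mul]
    field_simp
    ring
  · intro i j hij
    simp [boseMesner_apply, hij, hij.ne]
  · intro i j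
    rw [Matrix.smul_apply, boseMesner_apply, smul_eq_mul]
    split_ifs with hij hadj
    · subst hij
      exact absurd hadj (G.irrefl)
    all_goals exact mul_nonneg (inv_nonneg.mpr hn.le) (by linarith)
  · simp only [Matrix.smul_apply, smul_eq_mul, ← Finset.mul_sum, hG.sum_sum_boseMesner, c]
    have : 1 + r ≠ 0 := by linarith
    field_simp
    linear_combination n * hkey
  · rw [smul_one_sub_of_one_add_smul_adjMatrix]
    refine hG.posSemidef_boseMesner hrel hsr (le_of_eq ?_) ?_ (le_of_eq ?_)
    · field_simp
      ring
    · field_simp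
      nlinarith
    · field_simp
      ring
  · intro i j hij
    simp [adjMatrix_apply, hij]

theorem IsRegularOfDegree.theta_compl_eq [Nonempty V] (hG : G.IsRegularOfDegree d)
    (hrel : (G.adjMatrix ℝ - r • 1) * (G.adjMatrix ℝ - s • 1) = μ • of 1)
    (hsr : s < r) (hr : -1 < r) (hs : s < 0) :
    schrijverTheta Gᶜ = (s - d) / s ∧ lovaszTheta Gᶜ = (s - d) / s := by
  have hdn := hG.succ_le_card
  have hkey := hG.card_mul_add_mul_eq hrel
  have hval : -(Fintype.card V * (-1 - r)) / (((Fintype.card V - 1 - d : ℕ) : ℝ) - (-1 - r)) =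
      (s - d) / s := by
    have hdn' : (d : ℝ) + 1 ≤ Fintype.card V := by exact_mod_cast hdn
    have hden : (Fintype.card V : ℝ) - 1 - d - (-1 - r) ≠ 0 := by linarith
    have hs0 : s ≠ 0 := hs.ne
    rw [Nat.cast_sub (by omega), Nat.cast_sub (by omega), Nat.cast_one]
    field_simp
    linear_combination hkey
  -- `convert` reconciles the two decidability instances on `Gᶜ.Adj`
  have hGc : Gᶜ.IsRegularOfDegree (Fintype.card V - 1 - d) := by convert hG.compl
  rw [← hval]
  exact hGc.theta_eq (hG.adjMatrix_compl_sub_smul_one_mul hrel) (by linarith) (by linarith)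
    (by linarith)

end SimpleGraph

theorem IsSRG.isSRGWith [Fintype V] {G : SimpleGraph V} {n d l m : ℕ} (h : IsSRG G n d l m) :
    G.IsSRGWith n d l m := by
  obtain ⟨hn, hd, hl, hm, -, -⟩ := h
  have hnbhd : ∀ v, nbhd G v = G.neighborFinset v := fun v => by ext; simp [nbhd]
  have hcommon : ∀ v w, Fintype.card (G.commonNeighbors v w) = (nbhd G v ∩ nbhd G w).card := by
    intro v w
    rw [← Set.toFinset_card, hnbhd, hnbhd]
    congr 1
    ext x
    rw [Set.mem_toFinset]
    simp [SimpleGraph.commonNeighbors]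
  refine ⟨hn, fun v => ?_, fun v w hvw => ?_, fun v w hvw hnadj => ?_⟩
  · rw [← SimpleGraph.card_neighborFinset_eq_degree, ← hnbhd, hd]
  · rw [hcommon, hl v w hvw]
  · rw [hcommon, hm v w hvw hnadj]

namespace SimpleGraph.IsSRGWith

variable [Fintype V] {G : SimpleGraph V} [DecidableRel G.Adj] {n d l m : ℕ}

theorem lt_of_ne_bot (h : G.IsSRGWith n d l m) (hG : G ≠ ⊥) : l < d := by
  obtain ⟨v, w, hvw⟩ := ne_bot_iff_exists_adj.mp hG
  rw [← h.of_adj v w hvw, ← h.regular.degree_eq v]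
  exact hvw.card_commonNeighbors_lt_degree

theorem le_of_ne_top (h : G.IsSRGWith n d l m) (hG : G ≠ ⊤) : m ≤ d := by
  obtain ⟨v, w, hne, hvw⟩ := ne_top_iff_exists_not_adj.mp hG
  rw [← h.of_not_adj hne hvw, ← h.regular.degree_eq v]
  exact G.card_commonNeighbors_le_degree_left v w

theorem adjMatrix_sub_smul_one_mul (h : G.IsSRGWith n d l m) {r s : ℝ} (hsum : r + s = l - m)
    (hprod : r * s = m - d) :
    (G.adjMatrix ℝ - r • 1) * (G.adjMatrix ℝ - s • 1) = (m : ℝ) • of 1 := by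
  have hsq := h.matrix_eq (α := ℝ)
  rw [adjMatrix_compl_eq, sq] at hsq
  calc (G.adjMatrix ℝ - r • 1) * (G.adjMatrix ℝ - s • 1)
      = G.adjMatrix ℝ * G.adjMatrix ℝ - (r + s) • G.adjMatrix ℝ + (r * s) • 1 := by
        simp only [sub_mul, mul_sub, smul_mul_assoc, mul_smul_comm, Matrix.one_mul, Matrix.mul_one]
        module
    _ = (m : ℝ) • of 1 := by
        rw [hsq, hsum, hprod]
        module

end SimpleGraph.IsSRGWith

theorem srg_eigenvalues_sign {d l m t : ℝ} (hl : l < d) (hm : m ≤ d) (ht0 : 0 ≤ t)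
    (ht2 : t ^ 2 = (m - l) ^ 2 + 4 * (d - m)) : (l - m - t) / 2 < 0 ∧ 0 ≤ (l - m + t) / 2 := by
  constructor
  · by_contra! hs
    nlinarith [mul_nonneg (by linarith : 0 ≤ l - m - t) (by linarith : 0 ≤ l - m + t)]
  · by_contra! hr
    nlinarith [mul_nonneg (by linarith : 0 ≤ m - l - t) (by linarith : 0 ≤ m - l + t)]

end

theorem stmt14 {V : Type*} [Fintype V] (G : SimpleGraph V) (n d lam mu : ℕ)
    (h : IsSRG G n d lam mu) (t : ℝ)
    (ht : t = Real.sqrt (((mu : ℝ) - (lam : ℝ)) ^ 2 + 4 * ((d : ℝ) - (mu : ℝ)))) :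
    schrijverTheta G =
      (n : ℝ) * (t + (mu : ℝ) - (lam : ℝ)) /
        (2 * (d : ℝ) + t + (mu : ℝ) - (lam : ℝ)) ∧
    lovaszTheta G =
      (n : ℝ) * (t + (mu : ℝ) - (lam : ℝ)) /
        (2 * (d : ℝ) + t + (mu : ℝ) - (lam : ℝ)) ∧
    schrijverTheta Gᶜ = 1 + 2 * (d : ℝ) / (t + (mu : ℝ) - (lam : ℝ)) ∧
    lovaszTheta Gᶜ = 1 + 2 * (d : ℝ) / (t + (mu : ℝ) - (lam : ℝ)) ∧
    schrijverTheta G * schrijverTheta Gᶜ = (n : ℝ) ∧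
    lovaszTheta G * lovaszTheta Gᶜ = (n : ℝ) := by
  have hG := h.isSRGWith
  have hbot := h.2.2.2.2.2
  obtain ⟨v, -, -⟩ := SimpleGraph.ne_bot_iff_exists_adj.mp hbot
  have : Nonempty V := ⟨v⟩
  have hl : (lam : ℝ) < d := by exact_mod_cast hG.lt_of_ne_bot hbot
  have hm : (mu : ℝ) ≤ d := by exact_mod_cast hG.le_of_ne_top h.2.2.2.2.1
  have ht2 : t ^ 2 = ((mu : ℝ) - lam) ^ 2 + 4 * (d - mu) := by
    rw [ht, Real.sq_sqrt (by nlinarith)]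
  obtain ⟨hs, hr⟩ := srg_eigenvalues_sign hl hm (ht ▸ Real.sqrt_nonneg _) ht2
  set s : ℝ := (lam - mu - t) / 2 with hs_def
  have hrel := hG.adjMatrix_sub_smul_one_mul (r := (lam - mu + t) / 2) (s := s) (by ring)
    (by linear_combination (-1 / 4 : ℝ) * ht2)
  obtain ⟨h1, h2⟩ := hG.regular.theta_eq hrel (by linarith) (by linarith) hs
  obtain ⟨h3, h4⟩ := hG.regular.theta_compl_eq hrel (by linarith) (by linarith) hs
  have hds : (d : ℝ) - s ≠ 0 := by linarith [(Nat.cast_nonneg d : (0 : ℝ) ≤ d)]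
  have hs0 : s ≠ 0 := hs.ne
  have e1 : t + mu - lam = -2 * s := by rw [hs_def]; ring
  have e2 : 2 * d + t + mu - lam = 2 * (d - s) := by rw [hs_def]; ring
  rw [h1, h2, h3, h4, hG.card, e1, e2]
  refine ⟨?_, ?_, ?_, ?_, ?_, ?_⟩ <;> field_simp <;> ring
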